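/- Let $N \ge 3$, $m > 1$, $p > m$, $0 < k_1 \le k_2$, and suppose $r_0 > e$ with $\frac{k_2}{k_1} < (N-2)(m-1)\frac{p-m}{p-1}\log r_0$. Then there exist $\omega > 0$ and $C > 0$ such that both of the following hold: (i) $\frac{p-m}{p-1} \ge \omega\,\frac{m}{m-1}\,\frac{k_2}{\log r_0}$; (ii) $\omega\,\frac{m}{m-1}\left[k_1(N-2) - \frac{k_2}{(m-1)\log r_0}\right] \ge C^{p-1} + \frac{1}{p-1}$. -/

import Mathlib

/-!
Choose `ω` so that (i) holds with equality. Writing `a = (p - m)/(p - 1)` and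
`x = k₁ (N - 2) log r₀ / k₂`, the left side of (ii) then becomes `a (x - 1/(m - 1))`,
the hypothesis says `(m - 1) a x > 1`, and since `1 - a = (m - 1)/(p - 1)` this gives
`a (x - 1/(m - 1)) > 1/(p - 1)`. The positive excess is `C ^ (p - 1)` for a suitable `C > 0`.
-/

lemma Real.exists_pos_rpow_eq {S q : ℝ} (hS : 0 < S) (hq : q ≠ 0) : ∃ C > 0, C ^ q = S :=
  ⟨S ^ q⁻¹, Real.rpow_pos_of_pos hS _, Real.rpow_inv_rpow hS.le hq⟩

lemma one_div_sub_one_lt_mul_sub {m p x : ℝ} (hm : 1 < m) (hp : m < p)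
    (hx : 1 < (m - 1) * ((p - m) / (p - 1)) * x) :
    1 / (p - 1) < (p - m) / (p - 1) * (x - 1 / (m - 1)) := by
  have hm1 : 0 < m - 1 := by linarith
  have hp1 : 0 < p - 1 := by linarith
  have hx' : 1 / (m - 1) < (p - m) / (p - 1) * x := by
    rw [div_lt_iff₀ hm1]; linarith
  have h_compl : 1 / (p - 1) = (1 - (p - m) / (p - 1)) * (1 / (m - 1)) := by
    field_simp; ring
  rw [h_compl]
  nlinarith [div_pos (sub_pos.2 hp) hp1]

theorem param_selection_q2_super_general (N : ℕ) (m p k₁ k₂ r₀ : ℝ)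
    (hm : 1 < m) (hp : m < p) (hk₁ : 0 < k₁) (hk : k₁ ≤ k₂)
    (hr₀ : Real.exp 1 < r₀)
    (hC : k₂ / k₁ < (N - 2) * (m - 1) * ((p - m) / (p - 1)) * Real.log r₀) :
    ∃ ω > (0 : ℝ), ∃ C > (0 : ℝ),
      (p - m) / (p - 1) ≥ ω * (m / (m - 1)) * (k₂ / Real.log r₀) ∧
      ω * (m / (m - 1)) * (k₁ * (N - 2) - k₂ / ((m - 1) * Real.log r₀))
        ≥ C ^ (p - 1) + 1 / (p - 1) := by
  set L := Real.log r₀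
  set a := (p - m) / (p - 1)
  have hL : 0 < L := Real.log_pos ((Real.one_lt_exp_iff.2 one_pos).trans hr₀)
  have hm1 : 0 < m - 1 := by linarith
  have hk₂ : 0 < k₂ := hk₁.trans_le hk
  have ha : 0 < a := div_pos (by linarith) (by linarith)
  set ω := a * ((m - 1) / m) * (L / k₂)
  set x := k₁ * (N - 2) * L / k₂
  have h_eq : ω * (m / (m - 1)) * (k₂ / L) = a := by
    simp only [ω]; field_simp
  have h_rhs : ω * (m / (m - 1)) * (k₁ * (N - 2) - k₂ / ((m - 1) * L)) =
      a * (x - 1 / (m - 1)) := by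
    simp only [ω, x]; field_simp
  have hx : 1 < (m - 1) * a * x := by
    rw [div_lt_iff₀ hk₁] at hC
    rw [show (m - 1) * a * x = (N - 2) * (m - 1) * a * L * k₁ / k₂ by simp only [x]; ring,
      one_lt_div hk₂]
    exact hC
  obtain ⟨C, hC₀, hCpow⟩ := Real.exists_pos_rpow_eq
    (sub_pos.2 (one_div_sub_one_lt_mul_sub hm hp hx)) (by linarith : p - 1 ≠ 0)
  refine ⟨ω, by positivity, C, hC₀, h_eq.le, ?_⟩
  rw [h_rhs, hCpow]
  linarith

theorem param_selection_q2_super (N : ℕ) (m p k₁ k₂ r₀ : ℝ) (hN : 3 ≤ N)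
    (hm : 1 < m) (hp : m < p) (hk₁ : 0 < k₁) (hk : k₁ ≤ k₂)
    (hr₀ : Real.exp 1 < r₀)
    (hC : k₂ / k₁ < (N - 2) * (m - 1) * ((p - m) / (p - 1)) * Real.log r₀) :
    ∃ ω > (0 : ℝ), ∃ C > (0 : ℝ),
      (p - m) / (p - 1) ≥ ω * (m / (m - 1)) * (k₂ / Real.log r₀) ∧
      ω * (m / (m - 1)) * (k₁ * (N - 2) - k₂ / ((m - 1) * Real.log r₀))
        ≥ C ^ (p - 1) + 1 / (p - 1) :=
  param_selection_q2_super_general N m p k₁ k₂ r₀ hm hp hk₁ hk hr₀ hC
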